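/- arXiv:1402.6424 — 8 statements merged into one kernel-verified Lean document; each statement's English description precedes it below -/
import Mathlib

section
/- Let E and F be Hilbert C*-modules over C*-algebras A and B respectively, let φ : A → B be a linear map, and let T : E → F be a map satisfying ⟨Tx, Ty⟩ = φ(⟨x, y⟩) for all x, y ∈ E. Then T is linear. -/
open scoped RightActions ComplexOrder

/-- The class `CStarModule` as it stood in Mathlib of December 2024 (right `Aᵐᵒᵖ`-action,
`⟪x, y <• a⟫ = ⟪x, y⟫ * a`); current Mathlib's `CStarModule` uses a left action instead. -/
class CStarModuleRightAct (A E : Type*) [NonUnitalSemiring A] [StarRing A]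
    [Module ℂ A] [AddCommGroup E] [Module ℂ E] [PartialOrder A] [SMul Aᵐᵒᵖ E] [Norm A] [Norm E]
    extends Inner A E where
  inner_add_right {x} {y} {z} : inner x (y + z) = inner x y + inner x z
  inner_self_nonneg {x} : 0 ≤ inner x x
  inner_self {x} : inner x x = 0 ↔ x = 0
  inner_op_smul_right {a : A} {x y : E} : inner x (y <• a) = inner x y * a
  inner_smul_right_complex {z : ℂ} {x} {y} : inner x (z • y) = z • inner x y
  star_inner x y : star (inner x y) = inner y x
  norm_eq_sqrt_norm_inner_self x : ‖x‖ = √‖inner x x‖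

namespace CStarModuleRightAct

section Sesquilinear

variable {A E : Type*} [NonUnitalRing A] [StarRing A] [Module ℂ A] [PartialOrder A] [Norm A]
  [AddCommGroup E] [Module ℂ E] [SMul Aᵐᵒᵖ E] [Norm E] [CStarModuleRightAct A E]

lemma inner_add_left {x y z : E} : inner A (x + y) z = inner A x z + inner A y z := by
  rw [← star_inner z, inner_add_right, star_add, star_inner, star_inner]

lemma inner_sub_right {x y z : E} : inner A x (y - z) = inner A x y - inner A x z :=
  map_sub (AddMonoidHom.mk' (inner A x) fun _ _ => inner_add_right) y z

lemma inner_sub_left {x y z : E} : inner A (x - y) z = inner A x z - inner A y z := by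
  rw [← star_inner z, inner_sub_right, star_sub, star_inner, star_inner]

lemma inner_smul_left_complex [StarModule ℂ A] {z : ℂ} {x y : E} :
    inner A (z • x) y = star z • inner A x y := by
  rw [← star_inner y, inner_smul_right_complex, star_smul, star_inner]

end Sesquilinear

variable {A B E F : Type*}
  [NonUnitalSemiring A] [StarRing A] [Module ℂ A] [PartialOrder A] [Norm A]
  [NonUnitalRing B] [StarRing B] [Module ℂ B] [PartialOrder B] [Norm B]
  [AddCommGroup E] [Module ℂ E] [SMul Aᵐᵒᵖ E] [Norm E] [CStarModuleRightAct A E]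
  [AddCommGroup F] [Module ℂ F] [SMul Bᵐᵒᵖ F] [Norm F] [CStarModuleRightAct B F]

lemma inner_apply_smul_add {φ : A →ₗ[ℂ] B} {T : E → F}
    (hT : ∀ x y : E, (inner B (T x) (T y) : B) = φ (inner A x y)) (α : ℂ) (w x y : E) :
    inner B (T w) (T (α • x + y)) = inner B (T w) (α • T x + T y) := by
  rw [inner_add_right, inner_smul_right_complex, hT, hT, hT, inner_add_right,
    inner_smul_right_complex, map_add, map_smul]

end CStarModuleRightAct

theorem inner_preserving_map_linear_general
    {A B E F : Type*}
    [NonUnitalCStarAlgebra A] [PartialOrder A]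
    [NonUnitalCStarAlgebra B] [PartialOrder B]
    [AddCommGroup E] [Module ℂ E] [SMul Aᵐᵒᵖ E] [Norm E] [CStarModuleRightAct A E]
    [AddCommGroup F] [Module ℂ F] [SMul Bᵐᵒᵖ F] [Norm F] [CStarModuleRightAct B F]
    (φ : A →ₗ[ℂ] B) (T : E → F)
    (hT : ∀ x y : E, (inner B (T x) (T y) : B) = φ (inner A x y)) :
    ∀ (α : ℂ) (x y : E), T (α • x + y) = α • T x + T y := by
  intro α x y
  set d := T (α • x + y) - (α • T x + T y)
  have orthogonal_range : ∀ w, inner B (T w) d = 0 := fun w => by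
    rw [CStarModuleRightAct.inner_sub_right, CStarModuleRightAct.inner_apply_smul_add hT,
      sub_self]
  -- `d` is a combination of values of `T`, hence orthogonal to itself.
  have hdd : inner B d d = 0 := by
    rw [CStarModuleRightAct.inner_sub_left, CStarModuleRightAct.inner_add_left,
      CStarModuleRightAct.inner_smul_left_complex, orthogonal_range, orthogonal_range,
      orthogonal_range, smul_zero, add_zero, sub_zero]
  exact sub_eq_zero.mp (CStarModuleRightAct.inner_self.mp hdd)

/-- If `φ` is linear, every map `T` between Hilbert C*-modules preserving the inner products
with respect to `φ` is linear. -/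
theorem inner_preserving_map_linear
    {A B E F : Type*}
    [NonUnitalCStarAlgebra A] [PartialOrder A] [StarOrderedRing A]
    [NonUnitalCStarAlgebra B] [PartialOrder B] [StarOrderedRing B]
    [AddCommGroup E] [Module ℂ E] [SMul Aᵐᵒᵖ E] [Norm E] [CStarModuleRightAct A E]
    [AddCommGroup F] [Module ℂ F] [SMul Bᵐᵒᵖ F] [Norm F] [CStarModuleRightAct B F]
    (φ : A →ₗ[ℂ] B) (T : E → F)
    (hT : ∀ x y : E, (inner B (T x) (T y) : B) = φ (inner A x y)) :
    ∀ (α : ℂ) (x y : E), T (α • x + y) = α • T x + T y :=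
  inner_preserving_map_linear_general φ T hT
end

section
/- Let E and F be Hilbert C*-modules over C*-algebras A and B, with F full. Let T : E → F be a surjective linear map and φ : A → B a map such that ⟨Tx, Ty⟩ = φ(⟨x, y⟩) and T(xa) = T(x)φ(a) for all x, y ∈ E and a ∈ A. Then φ is additive and multiplicative: φ(αa₁ + a₂) = αφ(a₁) + φ(a₂) and φ(a₁a₂) = φ(a₁)φ(a₂) for all a₁, a₂ ∈ A and scalars α. -/
open scoped RightActions ComplexOrder

/-- The Hilbert C⋆-module class as it stood in Mathlib of December 2024 (right `A`-module
structure via `SMul Aᵐᵒᵖ E`, inner product `A`-linear on the right in the second variable).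
Mathlib's current `CStarModule` uses a left action instead, so the old class is restated here. -/
class CStarModuleRight (A E : Type*) [NonUnitalSemiring A] [StarRing A] [Module ℂ A]
    [AddCommGroup E] [Module ℂ E] [PartialOrder A] [SMul Aᵐᵒᵖ E] [Norm A] [Norm E]
    extends Inner A E where
  inner_add_right {x} {y} {z} : inner x (y + z) = inner x y + inner x z
  inner_self_nonneg {x} : 0 ≤ inner x x
  inner_self {x} : inner x x = 0 ↔ x = 0
  inner_op_smul_right {a : A} {x y : E} : inner x (y <• a) = inner x y * a
  inner_smul_right_complex {z : ℂ} {x} {y} : inner x (z • y) = z • inner x y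
  star_inner x y : star (inner x y) = inner y x
  norm_eq_sqrt_norm_inner_self x : ‖x‖ = √‖inner x x‖

/-! Inner products determine the right action, so `x <• (α • a₁ + a₂)` and `x <• (a₁ * a₂)`
expand as in a genuine module. Pushing these identities through `T` gives
`y <• φ (α • a₁ + a₂) = y <• (α • φ a₁ + φ a₂)` and `y <• φ (a₁ * a₂) = y <• (φ a₁ * φ a₂)` for
every `y = T x`, hence for every `y : F`; in a full module `y <• b = y <• c` for all `y` forces
`b = c`. -/

namespace CStarModuleRight

section Ring

variable {A E : Type*} [NonUnitalRing A] [StarRing A] [Module ℂ A] [PartialOrder A] [Norm A]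
  [AddCommGroup E] [Module ℂ E] [SMul Aᵐᵒᵖ E] [Norm E] [CStarModuleRight A E]

theorem inner_sub_right (x y z : E) : inner A x (y - z) = inner A x y - inner A x z :=
  (AddMonoidHom.mk' (inner A x) fun _ _ => inner_add_right).map_sub y z

theorem ext_inner_left {x y : E} (h : ∀ z : E, inner A z x = inner A z y) : x = y := by
  rw [← sub_eq_zero, ← inner_self (A := A), inner_sub_right, h, sub_self]

theorem op_smul_mul (x : E) (a b : A) : x <• (a * b) = x <• a <• b :=
  ext_inner_left (A := A) fun z => by simp only [inner_op_smul_right, mul_assoc]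

theorem op_smul_add_smul [SMulCommClass ℂ A A] (x : E) (α : ℂ) (a b : A) :
    x <• (α • a + b) = α • (x <• a) + x <• b :=
  ext_inner_left (A := A) fun z => by
    simp only [inner_op_smul_right, inner_add_right, inner_smul_right_complex, mul_add,
      mul_smul_comm]

end Ring

section Full

variable {B F : Type*} [NonUnitalCStarAlgebra B] [PartialOrder B]
  [AddCommGroup F] [Module ℂ F] [SMul Bᵐᵒᵖ F] [Norm F] [CStarModuleRight B F]

/-- Fullness gives `b * d = 0` for every `b`; take `b = star d` and use the C⋆-identity. -/
theorem eq_zero_of_forall_inner_mul_eq_zero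
    (hfull : (Submodule.span ℂ
      {b : B | ∃ y₁ y₂ : F, (inner B y₁ y₂ : B) = b}).topologicalClosure = ⊤)
    {d : B} (h : ∀ y₁ y₂ : F, inner B y₁ y₂ * d = 0) : d = 0 := by
  let K : Submodule ℂ B := LinearMap.ker (LinearMap.mulRight ℂ d)
  have hK_closed : IsClosed (K : Set B) :=
    isClosed_eq (continuous_mul_const d) continuous_const
  have hspan_le : Submodule.span ℂ {b : B | ∃ y₁ y₂ : F, (inner B y₁ y₂ : B) = b} ≤ K :=
    Submodule.span_le.mpr fun _ ⟨y₁, y₂, hb⟩ => hb ▸ h y₁ y₂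
  have hK : K = ⊤ :=
    top_le_iff.mp (hfull ▸ Submodule.topologicalClosure_minimal _ hspan_le hK_closed)
  have : star d * d = 0 := (hK ▸ Submodule.mem_top : star d ∈ K)
  exact CStarRing.star_mul_self_eq_zero_iff d |>.mp this

theorem eq_of_forall_op_smul_eq
    (hfull : (Submodule.span ℂ
      {b : B | ∃ y₁ y₂ : F, (inner B y₁ y₂ : B) = b}).topologicalClosure = ⊤)
    {b c : B} (h : ∀ y : F, y <• b = y <• c) : b = c := by
  refine sub_eq_zero.mp (eq_zero_of_forall_inner_mul_eq_zero hfull fun y₁ y₂ => ?_)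
  rw [mul_sub, ← inner_op_smul_right, ← inner_op_smul_right, h, sub_self]

end Full

end CStarModuleRight

theorem phi_additive_multiplicative_general
    {A B E F : Type*}
    [NonUnitalCStarAlgebra A] [PartialOrder A]
    [NonUnitalCStarAlgebra B] [PartialOrder B]
    [AddCommGroup E] [Module ℂ E] [SMul Aᵐᵒᵖ E] [Norm E] [CStarModuleRight A E]
    [AddCommGroup F] [Module ℂ F] [SMul Bᵐᵒᵖ F] [Norm F] [CStarModuleRight B F]
    (T : E →ₗ[ℂ] F) (hsurj : Function.Surjective T) (φ : A → B)
    (hfull : (Submodule.span ℂ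
      {b : B | ∃ y₁ y₂ : F, (inner B y₁ y₂ : B) = b}).topologicalClosure = ⊤)
    (hmod : ∀ (x : E) (a : A), T (x <• a) = T x <• φ a) :
    ∀ (α : ℂ) (a₁ a₂ : A),
      φ (α • a₁ + a₂) = α • φ a₁ + φ a₂ ∧ φ (a₁ * a₂) = φ a₁ * φ a₂ := by
  intro α a₁ a₂
  constructor <;> refine CStarModuleRight.eq_of_forall_op_smul_eq hfull fun y => ?_ <;>
    obtain ⟨x, rfl⟩ := hsurj y
  · rw [← hmod, CStarModuleRight.op_smul_add_smul, map_add, map_smul, hmod, hmod,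
      CStarModuleRight.op_smul_add_smul]
  · rw [← hmod, CStarModuleRight.op_smul_mul, hmod, hmod, CStarModuleRight.op_smul_mul]

/-- If a surjective linear map `T` between Hilbert C*-modules preserves inner products and is a
module map with respect to `φ`, and `F` is full, then `φ` is additive and multiplicative. -/
theorem phi_additive_multiplicative
    {A B E F : Type*}
    [NonUnitalCStarAlgebra A] [PartialOrder A] [StarOrderedRing A]
    [NonUnitalCStarAlgebra B] [PartialOrder B] [StarOrderedRing B]
    [AddCommGroup E] [Module ℂ E] [SMul Aᵐᵒᵖ E] [Norm E] [CStarModuleRight A E]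
    [AddCommGroup F] [Module ℂ F] [SMul Bᵐᵒᵖ F] [Norm F] [CStarModuleRight B F]
    (T : E →ₗ[ℂ] F) (hsurj : Function.Surjective T) (φ : A → B)
    (hfull : (Submodule.span ℂ
      {b : B | ∃ y₁ y₂ : F, (inner B y₁ y₂ : B) = b}).topologicalClosure = ⊤)
    (hip : ∀ x y : E, (inner B (T x) (T y) : B) = φ (inner A x y))
    (hmod : ∀ (x : E) (a : A), T (x <• a) = T x <• φ a) :
    ∀ (α : ℂ) (a₁ a₂ : A),
      φ (α • a₁ + a₂) = α • φ a₁ + φ a₂ ∧ φ (a₁ * a₂) = φ a₁ * φ a₂ :=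
  phi_additive_multiplicative_general T hsurj φ hfull hmod
end

section
/- Let E and F be Hilbert C*-modules over C*-algebras A and B, with F full. Let T : E → F be a surjective linear map and φ : A → B a map such that ⟨Tx, Ty⟩ = φ(⟨x, y⟩) and T(xa) = T(x)φ(a) for all x, y ∈ E and a ∈ A. Then φ is a *-homomorphism; in particular φ(a*) = φ(a)* for all a ∈ A. -/
open scoped RightActions ComplexOrder

/-- The Hilbert C⋆-module class as it stood in the older Mathlib (right modules, acting through
`Aᵐᵒᵖ`); Mathlib's `CStarModule` is now a left-module class. -/
class RightCStarModule (A E : Type*) [NonUnitalSemiring A] [StarRing A]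
    [Module ℂ A] [AddCommGroup E] [Module ℂ E] [PartialOrder A] [SMul Aᵐᵒᵖ E] [Norm A] [Norm E]
    extends Inner A E where
  inner_add_right {x} {y} {z} : inner x (y + z) = inner x y + inner x z
  inner_self_nonneg {x} : 0 ≤ inner x x
  inner_self {x} : inner x x = 0 ↔ x = 0
  inner_op_smul_right {a : A} {x y : E} : inner x (y <• a) = inner x y * a
  inner_smul_right_complex {z : ℂ} {x} {y} : inner x (z • y) = z • inner x y
  star_inner x y : star (inner x y) = inner y x
  norm_eq_sqrt_norm_inner_self x : ‖x‖ = √‖inner x x‖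

/-!
Identities in `B` are checked after left multiplication by the inner products of `F`: as `F` is
full, an element `d` annihilated by all of them satisfies `d⋆ d = 0`, so `d = 0`; as `T` is
surjective, these inner products are the `⟨T x, T y⟩ = φ ⟨x, y⟩`. The module rule
`⟨T x, T y⟩ φ a = φ (⟨x, y⟩ a)` then moves everything inside `φ`, where the `A`-linearity of the
inner product of `E` does the rest; for `star` one also uses `φ ⟨x, y⟩⋆ = φ ⟨y, x⟩` and the
multiplicativity already obtained.
-/

theorem CStarRing.eq_zero_of_forall_mul_eq_zero {B : Type*} [NonUnitalCStarAlgebra B]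
    {s : Set B} (hs : (Submodule.span ℂ s).topologicalClosure = ⊤) {d : B}
    (h : ∀ b ∈ s, b * d = 0) : d = 0 := by
  have hdense : Dense (Submodule.span ℂ s : Set B) :=
    Submodule.dense_iff_topologicalClosure_eq_top.mpr hs
  have hmul : (ContinuousLinearMap.mul ℂ B).flip d = 0 :=
    ContinuousLinearMap.ext_on hdense h
  exact (CStarRing.star_mul_self_eq_zero_iff d).mp (congrArg (· (star d)) hmul)

namespace RightCStarModule

variable {A E : Type*} [NonUnitalCStarAlgebra A] [PartialOrder A]
  [AddCommGroup E] [Module ℂ E] [SMul Aᵐᵒᵖ E] [Norm E] [RightCStarModule A E]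

theorem inner_op_smul_left {a : A} {x y : E} : inner A (x <• a) y = star a * inner A x y := by
  rw [← star_inner y (x <• a), inner_op_smul_right, star_mul, star_inner]

theorem inner_smul_add_right (α : ℂ) (x y z : E) :
    inner A x (α • y + z) = α • inner A x y + inner A x z := by
  rw [inner_add_right, inner_smul_right_complex]

theorem eq_of_forall_inner_mul_eq
    (hfull : (Submodule.span ℂ {a : A | ∃ x₁ x₂ : E, inner A x₁ x₂ = a}).topologicalClosure = ⊤)
    {a a' : A} (h : ∀ x₁ x₂ : E, inner A x₁ x₂ * a = inner A x₁ x₂ * a') : a = a' := by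
  refine sub_eq_zero.mp (CStarRing.eq_zero_of_forall_mul_eq_zero hfull ?_)
  rintro _ ⟨x₁, x₂, rfl⟩
  rw [mul_sub, h, sub_self]

end RightCStarModule

open RightCStarModule

section Intertwining

variable {A B E F : Type*}
  [NonUnitalCStarAlgebra A] [PartialOrder A] [NonUnitalCStarAlgebra B] [PartialOrder B]
  [AddCommGroup E] [Module ℂ E] [SMul Aᵐᵒᵖ E] [Norm E] [RightCStarModule A E]
  [AddCommGroup F] [Module ℂ F] [SMul Bᵐᵒᵖ F] [Norm F] [RightCStarModule B F]
  {T : E →ₗ[ℂ] F} {φ : A → B}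

theorem inner_map_mul_eq_map_inner_mul (hip : ∀ x y : E, inner B (T x) (T y) = φ (inner A x y))
    (hmod : ∀ (x : E) (a : A), T (x <• a) = T x <• φ a) (x y : E) (a : A) :
    inner B (T x) (T y) * φ a = φ (inner A x y * a) := by
  rw [← inner_op_smul_right, ← hmod, hip, inner_op_smul_right]

theorem map_smul_add_of_intertwining (hsurj : Function.Surjective T)
    (hfull : (Submodule.span ℂ {b : B | ∃ y₁ y₂ : F, inner B y₁ y₂ = b}).topologicalClosure = ⊤)
    (hip : ∀ x y : E, inner B (T x) (T y) = φ (inner A x y))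
    (hmod : ∀ (x : E) (a : A), T (x <• a) = T x <• φ a) (α : ℂ) (a₁ a₂ : A) :
    φ (α • a₁ + a₂) = α • φ a₁ + φ a₂ := by
  refine eq_of_forall_inner_mul_eq hfull (hsurj.forall₂.mpr fun x y => ?_)
  calc inner B (T x) (T y) * φ (α • a₁ + a₂)
      = φ (inner A x (α • (y <• a₁) + y <• a₂)) := by
        rw [inner_map_mul_eq_map_inner_mul hip hmod, inner_smul_add_right, inner_op_smul_right,
          inner_op_smul_right, mul_add, mul_smul_comm]
    _ = α • (inner B (T x) (T y) * φ a₁) + inner B (T x) (T y) * φ a₂ := by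
        rw [← hip, map_add, map_smul, inner_smul_add_right, hmod, hmod, inner_op_smul_right,
          inner_op_smul_right]
    _ = inner B (T x) (T y) * (α • φ a₁ + φ a₂) := by rw [mul_add, mul_smul_comm]

theorem map_mul_of_intertwining (hsurj : Function.Surjective T)
    (hfull : (Submodule.span ℂ {b : B | ∃ y₁ y₂ : F, inner B y₁ y₂ = b}).topologicalClosure = ⊤)
    (hip : ∀ x y : E, inner B (T x) (T y) = φ (inner A x y))
    (hmod : ∀ (x : E) (a : A), T (x <• a) = T x <• φ a) (a₁ a₂ : A) :
    φ (a₁ * a₂) = φ a₁ * φ a₂ := by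
  refine eq_of_forall_inner_mul_eq hfull (hsurj.forall₂.mpr fun x y => ?_)
  have hR := inner_map_mul_eq_map_inner_mul hip hmod
  calc inner B (T x) (T y) * φ (a₁ * a₂)
      = inner B (T x) (T (y <• a₁)) * φ a₂ := by
        rw [hR, hR, inner_op_smul_right, mul_assoc]
    _ = inner B (T x) (T y) * (φ a₁ * φ a₂) := by
        rw [hmod, inner_op_smul_right, mul_assoc]

theorem map_star_of_intertwining (hsurj : Function.Surjective T)
    (hfull : (Submodule.span ℂ {b : B | ∃ y₁ y₂ : F, inner B y₁ y₂ = b}).topologicalClosure = ⊤)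
    (hip : ∀ x y : E, inner B (T x) (T y) = φ (inner A x y))
    (hmod : ∀ (x : E) (a : A), T (x <• a) = T x <• φ a)
    (hmul : ∀ a₁ a₂ : A, φ (a₁ * a₂) = φ a₁ * φ a₂) (a : A) :
    φ (star a) = star (φ a) := by
  refine eq_of_forall_inner_mul_eq hfull (hsurj.forall₂.mpr fun x y => ?_)
  have hstar (u v : E) : star (φ (inner A u v)) = φ (inner A v u) := by
    rw [← hip, ← hip, star_inner]
  calc inner B (T x) (T y) * φ (star a)
      = star (φ (inner A (y <• star a) x)) := by
        rw [inner_map_mul_eq_map_inner_mul hip hmod, hstar, inner_op_smul_right]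
    _ = inner B (T x) (T y) * star (φ a) := by
        rw [inner_op_smul_left, star_star, hmul, ← hip, star_mul, star_inner]

end Intertwining

theorem phi_star_hom_general
    {A B E F : Type*}
    [NonUnitalCStarAlgebra A] [PartialOrder A]
    [NonUnitalCStarAlgebra B] [PartialOrder B]
    [AddCommGroup E] [Module ℂ E] [SMul Aᵐᵒᵖ E] [Norm E] [RightCStarModule A E]
    [AddCommGroup F] [Module ℂ F] [SMul Bᵐᵒᵖ F] [Norm F] [RightCStarModule B F]
    (T : E →ₗ[ℂ] F) (hsurj : Function.Surjective T) (φ : A → B)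
    (hfull : (Submodule.span ℂ
      {b : B | ∃ y₁ y₂ : F, (inner B y₁ y₂ : B) = b}).topologicalClosure = ⊤)
    (hip : ∀ x y : E, (inner B (T x) (T y) : B) = φ (inner A x y))
    (hmod : ∀ (x : E) (a : A), T (x <• a) = T x <• φ a) :
    (∀ (α : ℂ) (a₁ a₂ : A), φ (α • a₁ + a₂) = α • φ a₁ + φ a₂) ∧
    (∀ a₁ a₂ : A, φ (a₁ * a₂) = φ a₁ * φ a₂) ∧
    (∀ a : A, φ (star a) = star (φ a)) :=
  have hmul := map_mul_of_intertwining hsurj hfull hip hmod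
  ⟨map_smul_add_of_intertwining hsurj hfull hip hmod, hmul,
    map_star_of_intertwining hsurj hfull hip hmod hmul⟩

/-- If a surjective linear map `T` between Hilbert C*-modules preserves inner products and is a
module map with respect to `φ`, and `F` is full, then `φ` is a *-homomorphism; in particular
`φ (star a) = star (φ a)`. -/
theorem phi_star_hom
    {A B E F : Type*}
    [NonUnitalCStarAlgebra A] [PartialOrder A] [StarOrderedRing A]
    [NonUnitalCStarAlgebra B] [PartialOrder B] [StarOrderedRing B]
    [AddCommGroup E] [Module ℂ E] [SMul Aᵐᵒᵖ E] [Norm E] [RightCStarModule A E]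
    [AddCommGroup F] [Module ℂ F] [SMul Bᵐᵒᵖ F] [Norm F] [RightCStarModule B F]
    (T : E →ₗ[ℂ] F) (hsurj : Function.Surjective T) (φ : A → B)
    (hfull : (Submodule.span ℂ
      {b : B | ∃ y₁ y₂ : F, (inner B y₁ y₂ : B) = b}).topologicalClosure = ⊤)
    (hip : ∀ x y : E, (inner B (T x) (T y) : B) = φ (inner A x y))
    (hmod : ∀ (x : E) (a : A), T (x <• a) = T x <• φ a) :
    (∀ (α : ℂ) (a₁ a₂ : A), φ (α • a₁ + a₂) = α • φ a₁ + φ a₂) ∧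
    (∀ a₁ a₂ : A, φ (a₁ * a₂) = φ a₁ * φ a₂) ∧
    (∀ a : A, φ (star a) = star (φ a)) :=
  phi_star_hom_general T hsurj φ hfull hip hmod
end

section
/- Let E and F be Hilbert C*-modules over C*-algebras A and B, T : E → F a surjective linear isometry, and φ : A → B a *-isomorphism such that T(xa) = T(x)φ(a) for all x ∈ E, a ∈ A. Then T preserves the inner products with respect to φ: ⟨Tx, Ty⟩ = φ(⟨x, y⟩) for all x, y ∈ E. -/
open scoped RightActions ComplexOrder

/-! The module-map property gives `‖star (φ a) * ⟪Tx, Tx⟫ * φ a‖ = ‖T (x <• a)‖² = ‖x <• a‖² =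
‖star (φ a) * φ ⟪x, x⟫ * φ a‖` for every `a`, and two positive elements of a C⋆-algebra whose
compressions `star b * _ * b` all have equal norms coincide (Lance, Lemma 3.5). In the unital case
this is tested against `b = (Q + ε)^(-1/2)`; the general case reduces to it through the
unitization and an approximate unit. Polarization passes from `x = y` to arbitrary pairs. -/

open Filter Topology CFC
open scoped CStarAlgebra

lemma Unitization.mul_inr_mem_range_inr {R A : Type*} [CommSemiring R] [NonUnitalSemiring A]
    [Module R A] (d : Unitization R A) (b : A) :
    d * (b : Unitization R A) ∈ Set.range ((↑) : A → Unitization R A) :=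
  ⟨d.fst • b + d.snd * b, by ext <;> simp⟩

lemma Unitization.inr_mul_mem_range_inr {R A : Type*} [CommSemiring R] [NonUnitalSemiring A]
    [Module R A] (b : A) (d : Unitization R A) :
    (b : Unitization R A) * d ∈ Set.range ((↑) : A → Unitization R A) :=
  ⟨d.fst • b + b * d.snd, by ext <;> simp⟩

lemma norm_sqrt_mul_sq {C : Type*} [NonUnitalCStarAlgebra C] [PartialOrder C]
    [StarOrderedRing C] {X : C} (hX : 0 ≤ X) {d : C} (hd : IsSelfAdjoint d) :
    ‖sqrt X * d‖ ^ 2 = ‖star d * X * d‖ := by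
  rw [sq, ← CStarRing.norm_star_mul_self, star_mul, (sqrt_nonneg X).isSelfAdjoint.star_eq,
    hd.star_eq, mul_assoc, ← mul_assoc (sqrt X), sqrt_mul_sqrt_self X hX, ← mul_assoc]

lemma CStarAlgebra.le_of_forall_norm_conj_le {C : Type*} [CStarAlgebra C] [PartialOrder C]
    [StarOrderedRing C] {P Q : C} (hP : 0 ≤ P) (hQ : 0 ≤ Q)
    (h : ∀ d : C, ‖star d * P * d‖ ≤ ‖star d * Q * d‖) : P ≤ Q := by
  have hlim : Tendsto (fun ε : ℝ => Q + algebraMap ℝ C ε) (𝓝[>] 0) (𝓝 Q) := by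
    have : Continuous fun ε : ℝ => Q + algebraMap ℝ C ε := by fun_prop
    simpa using (this.tendsto 0).mono_left nhdsWithin_le_nhds
  refine ge_of_tendsto hlim (eventually_nhdsWithin_of_forall fun ε (hε : 0 < ε) => ?_)
  have hb : IsStrictlyPositive (Q + algebraMap ℝ C ε) :=
    IsStrictlyPositive.nonneg_add hQ (isStrictlyPositive_algebraMap hε)
  have hd : IsSelfAdjoint ((Q + algebraMap ℝ C ε) ^ (-(1 / 2) : ℝ)) := rpow_nonneg.isSelfAdjoint
  have hQb := (le_iff_norm_sqrt_mul_rpow Q _ hQ hb).mp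
    (le_add_of_nonneg_right (isStrictlyPositive_algebraMap hε).nonneg)
  rw [le_iff_norm_sqrt_mul_rpow P _ hP hb, ← sq_le_one_iff₀ (norm_nonneg _),
    norm_sqrt_mul_sq hP hd]
  exact (h _).trans ((norm_sqrt_mul_sq hQ hd).symm.trans_le (pow_le_one₀ (norm_nonneg _) hQb))

section NonUnital
variable {B : Type*} [NonUnitalCStarAlgebra B] [PartialOrder B] [StarOrderedRing B]

lemma Filter.IsIncreasingApproximateUnit.tendsto_star_mul_mul {l : Filter B}
    (hl : l.IsIncreasingApproximateUnit) (x : B) :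
    Tendsto (fun e => star e * x * e) l (𝓝 x) := by
  have hleft := ((hl.tendsto_mul_left x).sub_const x).norm
  have hright := ((hl.tendsto_mul_right x).sub_const x).norm
  rw [sub_self, norm_zero] at hleft hright
  rw [tendsto_iff_norm_sub_tendsto_zero]
  refine squeeze_zero' (.of_forall fun _ => norm_nonneg _) ?_ (by simpa using hleft.add hright)
  filter_upwards [hl.eventually_star_eq, hl.eventually_norm] with e he he1
  calc ‖star e * x * e - x‖ = ‖(x * e - x) + (e * x - x) * e‖ := by rw [he]; noncomm_ring
    _ ≤ ‖x * e - x‖ + ‖e * x - x‖ * ‖e‖ := norm_add_le_of_le le_rfl (norm_mul_le _ _)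
    _ ≤ ‖x * e - x‖ + ‖e * x - x‖ := by gcongr; exact mul_le_of_le_one_right (norm_nonneg _) he1

lemma norm_conj_inr_le_of_forall_norm_conj_le {P Q : B}
    (h : ∀ b : B, ‖star b * P * b‖ ≤ ‖star b * Q * b‖) (d : B⁺¹) :
    ‖star d * (P : B⁺¹) * d‖ ≤ ‖star d * (Q : B⁺¹) * d‖ := by
  -- `star d * P * d` lies in `B`, and compressing it by an approximate unit `e` is compressing
  -- `P` by `d * e ∈ B`.
  have conj_mem (R : B) : star d * (R : B⁺¹) * d ∈ Set.range ((↑) : B → B⁺¹) := by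
    obtain ⟨c, hc⟩ := Unitization.inr_mul_mem_range_inr R d
    rw [mul_assoc, ← hc]
    exact Unitization.mul_inr_mem_range_inr _ _
  obtain ⟨p, hp⟩ := conj_mem P
  obtain ⟨q, hq⟩ := conj_mem Q
  have hpq (e : B) : ‖star e * p * e‖ ≤ ‖star e * q * e‖ := by
    obtain ⟨b, hb⟩ := Unitization.mul_inr_mem_range_inr d e
    have conj_eq (R r : B) (hr : (r : B⁺¹) = star d * R * d) :
        star b * R * b = star e * r * e := by
      apply Unitization.inr_injective (R := ℂ)
      simp only [Unitization.inr_mul, Unitization.inr_star, hb, hr, star_mul]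
      noncomm_ring
    rw [← conj_eq P p hp, ← conj_eq Q q hq]
    exact h b
  have hl := CStarAlgebra.increasingApproximateUnit B
  have := hl.neBot
  rw [← hp, ← hq, Unitization.norm_inr, Unitization.norm_inr]
  exact le_of_tendsto_of_tendsto' (hl.tendsto_star_mul_mul p).norm
    (hl.tendsto_star_mul_mul q).norm hpq

lemma le_of_forall_norm_conj_le {P Q : B} (hP : 0 ≤ P) (hQ : 0 ≤ Q)
    (h : ∀ b : B, ‖star b * P * b‖ ≤ ‖star b * Q * b‖) : P ≤ Q :=
  (Unitization.inr_le_iff P Q hP.isSelfAdjoint hQ.isSelfAdjoint).mp <|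
    CStarAlgebra.le_of_forall_norm_conj_le (Unitization.inr_nonneg_iff.mpr hP)
      (Unitization.inr_nonneg_iff.mpr hQ) (norm_conj_inr_le_of_forall_norm_conj_le h)

lemma eq_of_forall_norm_conj_eq {P Q : B} (hP : 0 ≤ P) (hQ : 0 ≤ Q)
    (h : ∀ b : B, ‖star b * P * b‖ = ‖star b * Q * b‖) : P = Q :=
  le_antisymm (le_of_forall_norm_conj_le hP hQ fun b => (h b).le)
    (le_of_forall_norm_conj_le hQ hP fun b => (h b).ge)

end NonUnital

lemma eq_zero_of_forall_apply_self_eq_zero {E M : Type*} [AddCommGroup E] [Module ℂ E]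
    [AddCommGroup M] [Module ℂ M] (D : E → E → M)
    (add_left : ∀ x y z, D (x + y) z = D x z + D y z)
    (add_right : ∀ x y z, D x (y + z) = D x y + D x z)
    (smul_left : ∀ (c : ℂ) x y, D (c • x) y = star c • D x y)
    (smul_right : ∀ (c : ℂ) x y, D x (c • y) = c • D x y)
    (h : ∀ x, D x x = 0) (x y : E) : D x y = 0 := by
  have hxy := h (x + y)
  have hxiy := h (x + Complex.I • y)
  simp only [add_left, add_right, smul_left, smul_right, h, smul_zero, zero_add, add_zero,
    Complex.star_def, Complex.conj_I] at hxy hxiy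
  linear_combination (norm := skip) (1 / 2 : ℂ) • hxy - (Complex.I / 2) • hxiy
  match_scalars <;> ring_nf <;> simp only [Complex.I_sq] <;> ring

namespace RightCStarModule

section Algebraic
variable {A E : Type*} [NonUnitalSemiring A] [StarRing A] [Module ℂ A] [PartialOrder A] [Norm A]
  [AddCommGroup E] [Module ℂ E] [SMul Aᵐᵒᵖ E] [Norm E] [RightCStarModule A E]

lemma inner_add_left {x y z : E} : inner A (x + y) z = inner A x z + inner A y z := by
  rw [← star_inner (A := A), inner_add_right, star_add, star_inner, star_inner]

lemma inner_smul_left_complex [StarModule ℂ A] {c : ℂ} {x y : E} :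
    inner A (c • x) y = star c • inner A x y := by
  rw [← star_inner (A := A), inner_smul_right_complex, star_smul, star_inner]

lemma inner_op_smul_op_smul_self {a : A} {x : E} :
    inner A (x <• a) (x <• a) = star a * inner A x x * a := by
  rw [inner_op_smul_right, ← star_inner (A := A), inner_op_smul_right, star_mul, star_inner,
    mul_assoc]

end Algebraic

lemma norm_sq_eq_norm_inner_self {A E : Type*} [NonUnitalCStarAlgebra A] [PartialOrder A]
    [AddCommGroup E] [Module ℂ E] [SMul Aᵐᵒᵖ E] [Norm E] [RightCStarModule A E] {x : E} :
    ‖x‖ ^ 2 = ‖inner A x x‖ := by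
  rw [norm_eq_sqrt_norm_inner_self (A := A) x, Real.sq_sqrt (norm_nonneg _)]

end RightCStarModule

open RightCStarModule in
lemma inner_map_self_eq_of_isometry {A B E F : Type*}
    [NonUnitalCStarAlgebra A] [PartialOrder A] [StarOrderedRing A]
    [NonUnitalCStarAlgebra B] [PartialOrder B] [StarOrderedRing B]
    [AddCommGroup E] [Module ℂ E] [SMul Aᵐᵒᵖ E] [Norm E] [RightCStarModule A E]
    [AddCommGroup F] [Module ℂ F] [SMul Bᵐᵒᵖ F] [Norm F] [RightCStarModule B F]
    {T : E → F} (hiso : ∀ x : E, ‖T x‖ = ‖x‖) {φ : A ≃⋆ₐ[ℂ] B}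
    (hmod : ∀ (x : E) (a : A), T (x <• a) = T x <• φ a) (x : E) :
    inner B (T x) (T x) = φ (inner A x x) := by
  refine eq_of_forall_norm_conj_eq inner_self_nonneg (map_nonneg φ inner_self_nonneg) fun b => ?_
  obtain ⟨a, rfl⟩ := φ.surjective b
  calc ‖star (φ a) * inner B (T x) (T x) * φ a‖ = ‖inner B (T (x <• a)) (T (x <• a))‖ := by
        rw [hmod, inner_op_smul_op_smul_self]
    _ = ‖inner A (x <• a) (x <• a)‖ := by
        rw [← norm_sq_eq_norm_inner_self, ← norm_sq_eq_norm_inner_self, hiso]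
    _ = ‖star (φ a) * φ (inner A x x) * φ a‖ := by
        rw [inner_op_smul_op_smul_self, ← StarAlgEquiv.norm_map φ, map_mul, map_mul, map_star]

theorem module_map_isometry_preserves_inner_general
    {A B E F : Type*}
    [NonUnitalCStarAlgebra A] [PartialOrder A] [StarOrderedRing A]
    [NonUnitalCStarAlgebra B] [PartialOrder B] [StarOrderedRing B]
    [AddCommGroup E] [Module ℂ E] [SMul Aᵐᵒᵖ E] [Norm E] [RightCStarModule A E]
    [AddCommGroup F] [Module ℂ F] [SMul Bᵐᵒᵖ F] [Norm F] [RightCStarModule B F]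
    (T : E →ₗ[ℂ] F) (hiso : ∀ x : E, ‖T x‖ = ‖x‖)
    (φ : A ≃⋆ₐ[ℂ] B)
    (hmod : ∀ (x : E) (a : A), T (x <• a) = T x <• φ a) :
    ∀ x y : E, (inner B (T x) (T y) : B) = φ (inner A x y) := by
  intro x y
  rw [← sub_eq_zero]
  refine eq_zero_of_forall_apply_self_eq_zero (fun x y => inner B (T x) (T y) - φ (inner A x y))
    (fun _ _ _ => ?_) (fun _ _ _ => ?_) (fun _ _ _ => ?_) (fun _ _ _ => ?_)
    (fun x => sub_eq_zero.mpr (inner_map_self_eq_of_isometry hiso hmod x)) x y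
  · simp only [map_add, RightCStarModule.inner_add_left]; abel
  · simp only [map_add, RightCStarModule.inner_add_right]; abel
  · simp only [map_smul, RightCStarModule.inner_smul_left_complex, smul_sub]
  · simp only [map_smul, RightCStarModule.inner_smul_right_complex, smul_sub]

/-- If `T` is a surjective linear isometry between Hilbert C*-modules which is a module map with
respect to a *-isomorphism `φ`, then `T` preserves the inner products with respect to `φ`. -/
theorem module_map_isometry_preserves_inner
    {A B E F : Type*}
    [NonUnitalCStarAlgebra A] [PartialOrder A] [StarOrderedRing A]
    [NonUnitalCStarAlgebra B] [PartialOrder B] [StarOrderedRing B]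
    [AddCommGroup E] [Module ℂ E] [SMul Aᵐᵒᵖ E] [Norm E] [RightCStarModule A E]
    [AddCommGroup F] [Module ℂ F] [SMul Bᵐᵒᵖ F] [Norm F] [RightCStarModule B F]
    (T : E →ₗ[ℂ] F) (hsurj : Function.Surjective T) (hiso : ∀ x : E, ‖T x‖ = ‖x‖)
    (φ : A ≃⋆ₐ[ℂ] B)
    (hmod : ∀ (x : E) (a : A), T (x <• a) = T x <• φ a) :
    ∀ x y : E, (inner B (T x) (T y) : B) = φ (inner A x y) :=
  module_map_isometry_preserves_inner_general T hiso φ hmod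
end

section
/- Let n ≥ 2. The transpose map T : H_c^n → H_r^n, T(A) = Aᵗ, is a surjective linear isometry and a module map with respect to φ : ℂ → M_n(ℂ), φ(α) = αI (i.e., T(Aα) = T(A)φ(α)), but T does not preserve inner products with respect to φ: there exist A, B ∈ H_c^n with ⟨TA, TB⟩ ≠ φ(⟨A, B⟩). -/
/-!
By the C*-identity, `‖(Aᵀ)ᴴ Aᵀ‖ = ‖Aᵀ‖² = ‖Aᵀ (Aᵀ)ᴴ‖ = ‖(Aᴴ A)ᵀ‖`, and for `A` supported in one
column `Aᴴ A` is diagonal with the single nonzero entry `⟨A, A⟩`, so `T` is isometric. Inner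
products are not preserved: the matrix units `E₀₀` and `E₁₀` are orthogonal columns, while
`(E₀₀ᵀ)ᴴ E₁₀ᵀ = E₀₁ ≠ 0`.
-/

open Matrix
open scoped Matrix.Norms.L2Operator

namespace Matrix

variable {m n 𝕜 : Type*} [RCLike 𝕜]

lemma l2_opNorm_conjTranspose_transpose_mul_transpose [Fintype m] [Fintype n] [DecidableEq m]
    [DecidableEq n] (A : Matrix m n 𝕜) :
    ‖Aᵀᴴ * Aᵀ‖ = ‖(Aᴴ * A)ᵀ‖ :=
  calc ‖Aᵀᴴ * Aᵀ‖ = ‖Aᵀᴴ‖ * ‖Aᵀᴴ‖ := by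
        rw [l2_opNorm_conjTranspose_mul_self, l2_opNorm_conjTranspose]
    _ = ‖Aᵀᴴᴴ * Aᵀᴴ‖ := (l2_opNorm_conjTranspose_mul_self _).symm
    _ = ‖(Aᴴ * A)ᵀ‖ := by rw [conjTranspose_conjTranspose, transpose_mul,
      conjTranspose_transpose_eq_transpose_conjTranspose]

lemma conjTranspose_mul_self_eq_diagonal_of_col [Fintype m] [DecidableEq n] {A : Matrix m n 𝕜}
    {j₀ : n} (hA : ∀ i j, j ≠ j₀ → A i j = 0) :
    Aᴴ * A = diagonal (Pi.single j₀ ((Aᴴ * A) j₀ j₀)) := by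
  ext i j
  by_cases hi : i = j₀ <;> by_cases hj : j = j₀ <;>
    simp [mul_apply, diagonal_apply, hi, hj, eq_comm (a := j₀), hA _ i, hA _ j]

lemma l2_opNorm_conjTranspose_transpose_mul_transpose_of_col [Fintype m] [Fintype n]
    [DecidableEq m] [DecidableEq n] {A : Matrix m n 𝕜} {j₀ : n}
    (hA : ∀ i j, j ≠ j₀ → A i j = 0) :
    ‖Aᵀᴴ * Aᵀ‖ = ‖(Aᴴ * A) j₀ j₀‖ := by
  rw [l2_opNorm_conjTranspose_transpose_mul_transpose,
    conjTranspose_mul_self_eq_diagonal_of_col hA, diagonal_transpose, l2_opNorm_diagonal,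
    Pi.norm_single, diagonal_apply_eq, Pi.single_eq_same]

variable [Fintype n] [DecidableEq n]

lemma conjTranspose_transpose_single_mul_transpose_single (i j k : n) :
    (single i k (1 : 𝕜))ᵀᴴ * (single j k (1 : 𝕜))ᵀ = single i j 1 := by
  simp [transpose_single, conjTranspose_single]

lemma conjTranspose_single_mul_single_of_ne {i j : n} (hij : i ≠ j) (k : n) :
    (single i k (1 : 𝕜))ᴴ * single j k 1 = 0 := by
  rw [conjTranspose_single, star_one, single_mul_single_of_ne _ _ _ _ hij]

end Matrix

/-- For `n ≥ 2`, the transpose map `T : H_c^n → H_r^n` is a surjective linear isometry and a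
module map with respect to `φ : ℂ → M_n(ℂ)`, `φ(α) = α I`, but `T` does not preserve the inner
products with respect to `φ`: there are `A, B ∈ H_c^n` with `⟨T A, T B⟩ ≠ φ(⟨A, B⟩)`.
Here the inner product on `H_c^n` is identified with the `(0,0)` entry of `Aᴴ * B`. -/
theorem transpose_column_to_row_module_map_not_inner_preserving
    (n : ℕ) (hn : 2 ≤ n) :
    -- `T` maps the column space into the row space
    (∀ A : Matrix (Fin n) (Fin n) ℂ, (∀ i j, j ≠ (⟨0, by omega⟩ : Fin n) → A i j = 0) →
      ∀ i j, i ≠ (⟨0, by omega⟩ : Fin n) → Aᵀ i j = 0) ∧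
    -- `T` is linear
    (∀ (c : ℂ) (A B : Matrix (Fin n) (Fin n) ℂ), (c • A + B)ᵀ = c • Aᵀ + Bᵀ) ∧
    -- `T` is surjective onto the row space
    (∀ C : Matrix (Fin n) (Fin n) ℂ, (∀ i j, i ≠ (⟨0, by omega⟩ : Fin n) → C i j = 0) →
      ∃ A : Matrix (Fin n) (Fin n) ℂ,
        (∀ i j, j ≠ (⟨0, by omega⟩ : Fin n) → A i j = 0) ∧ Aᵀ = C) ∧
    -- `T` is isometric for the Hilbert C*-module norms
    (∀ A : Matrix (Fin n) (Fin n) ℂ, (∀ i j, j ≠ (⟨0, by omega⟩ : Fin n) → A i j = 0) →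
      Real.sqrt ‖Aᵀᴴ * Aᵀ‖ =
        Real.sqrt ‖(Aᴴ * A) (⟨0, by omega⟩ : Fin n) (⟨0, by omega⟩ : Fin n)‖) ∧
    -- `T` is a module map with respect to `φ(α) = α I`
    (∀ (α : ℂ) (A : Matrix (Fin n) (Fin n) ℂ),
      (α • A)ᵀ = Aᵀ * (α • (1 : Matrix (Fin n) (Fin n) ℂ))) ∧
    -- but `T` does not preserve the inner products with respect to `φ`
    (∃ A B : Matrix (Fin n) (Fin n) ℂ,
      (∀ i j, j ≠ (⟨0, by omega⟩ : Fin n) → A i j = 0) ∧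
      (∀ i j, j ≠ (⟨0, by omega⟩ : Fin n) → B i j = 0) ∧
      Aᵀᴴ * Bᵀ ≠
        ((Aᴴ * B) (⟨0, by omega⟩ : Fin n) (⟨0, by omega⟩ : Fin n)) •
          (1 : Matrix (Fin n) (Fin n) ℂ)) := by
  set e₀ : Fin n := ⟨0, by omega⟩
  set e₁ : Fin n := ⟨1, by omega⟩
  have he : e₀ ≠ e₁ := by simp [e₀, e₁, Fin.ext_iff]
  refine ⟨fun A hA i j hi => hA j i hi,
    fun c A B => by rw [transpose_add, transpose_smul],
    fun C hC => ⟨Cᵀ, fun i j hj => hC j i hj, transpose_transpose C⟩,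
    fun A hA => by rw [l2_opNorm_conjTranspose_transpose_mul_transpose_of_col hA],
    fun α A => by rw [Matrix.mul_smul, mul_one, transpose_smul],
    single e₀ e₀ 1, single e₁ e₀ 1,
    fun i j hj => single_apply_of_col_ne _ _ hj.symm _,
    fun i j hj => single_apply_of_col_ne _ _ hj.symm _, ?_⟩
  · rw [conjTranspose_transpose_single_mul_transpose_single,
      conjTranspose_single_mul_single_of_ne he, Matrix.zero_apply, zero_smul]
    intro h
    simpa using congr($h e₀ e₁)
end

section
/- Let X, Y be locally compact Hausdorff spaces, H₁, H₂ Hilbert spaces, σ : Y → X a homeomorphism, and h : Y → B(H₁, H₂) a map such that h(y) is unitary for each y and h is continuous in the strong operator topology. Then the weighted composition operator T : C₀(X, H₁) → C₀(Y, H₂), (Tf)(y) = h(y)(f(σ(y))), is a well-defined surjective linear isometry, and ⟨Tf, Tg⟩ = ⟨f, g⟩ ∘ σ for all f, g ∈ C₀(X, H₁). -/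
/-!
`T` factors as precomposition with `σ` followed by applying the unitary `h y` in each fiber.
Both steps preserve pointwise norms up to the relabelling `σ`, hence sup norms, and both are
invertible within `C₀`. The only analytic input is that a strongly continuous family of
isometries maps continuous functions to continuous functions and has strongly continuous
inverses.
-/

open scoped ZeroAtInfty

section StrongContinuity

variable {Y R E F : Type*} [TopologicalSpace Y] [Semiring R]
  [SeminormedAddCommGroup E] [SeminormedAddCommGroup F] [Module R E] [Module R F]

/-- Strong continuity of a family of isometries upgrades to joint continuity, since
`dist (e y (g y)) (e y₀ (g y₀)) ≤ dist (g y) (g y₀) + dist (e y (g y₀)) (e y₀ (g y₀))`. -/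
theorem continuous_linearIsometry_apply {e : Y → E →ₗᵢ[R] F}
    (he : ∀ v, Continuous fun y ↦ e y v) {g : Y → E} (hg : Continuous g) :
    Continuous fun y ↦ e y (g y) := by
  refine continuous_iff_continuousAt.2 fun y₀ ↦ tendsto_iff_dist_tendsto_zero.2 ?_
  have hbound : ∀ y, dist (e y (g y)) (e y₀ (g y₀))
      ≤ dist (g y) (g y₀) + dist (e y (g y₀)) (e y₀ (g y₀)) := fun y ↦ by
    calc dist (e y (g y)) (e y₀ (g y₀))
        ≤ dist (e y (g y)) (e y (g y₀)) + dist (e y (g y₀)) (e y₀ (g y₀)) := dist_triangle _ _ _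
      _ = dist (g y) (g y₀) + dist (e y (g y₀)) (e y₀ (g y₀)) := by rw [(e y).dist_map]
  have hlim := (tendsto_iff_dist_tendsto_zero.1 (hg.tendsto y₀)).add
    (tendsto_iff_dist_tendsto_zero.1 ((he (g y₀)).tendsto y₀))
  rw [zero_add] at hlim
  exact squeeze_zero (fun _ ↦ dist_nonneg) hbound hlim

theorem continuous_linearIsometryEquiv_symm_apply {e : Y → E ≃ₗᵢ[R] F}
    (he : ∀ v, Continuous fun y ↦ e y v) (v : F) :
    Continuous fun y ↦ (e y).symm v := by
  refine continuous_iff_continuousAt.2 fun y₀ ↦ tendsto_iff_dist_tendsto_zero.2 ?_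
  have hdist : ∀ y, dist ((e y).symm v) ((e y₀).symm v) = dist v (e y ((e y₀).symm v)) :=
    fun y ↦ by rw [← (e y).dist_map, LinearIsometryEquiv.apply_symm_apply]
  have hlim := (tendsto_const_nhds (x := v)).dist ((he ((e y₀).symm v)).tendsto y₀)
  rw [LinearIsometryEquiv.apply_symm_apply, dist_self] at hlim
  simpa only [hdist] using hlim

end StrongContinuity

namespace ZeroAtInftyContinuousMap

variable {X Y 𝕜 E F : Type*} [TopologicalSpace X] [TopologicalSpace Y] [NormedField 𝕜]
  [NormedAddCommGroup E] [NormedAddCommGroup F] [NormedSpace 𝕜 E] [NormedSpace 𝕜 F]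

theorem norm_eq_of_forall_norm_apply_eq {f : C₀(Y, E)} {g : C₀(Y, F)}
    (hfg : ∀ y, ‖g y‖ = ‖f y‖) : ‖g‖ = ‖f‖ := by
  rw [← norm_toBCF_eq_norm, ← norm_toBCF_eq_norm, BoundedContinuousFunction.norm_eq_iSup_norm,
    BoundedContinuousFunction.norm_eq_iSup_norm]
  exact iSup_congr hfg

theorem norm_comp_homeomorph (σ : Y ≃ₜ X) (f : C₀(X, E)) :
    ‖f.comp σ.toCocompactMap‖ = ‖f‖ := by
  rw [← norm_toBCF_eq_norm, ← norm_toBCF_eq_norm, BoundedContinuousFunction.norm_eq_iSup_norm,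
    BoundedContinuousFunction.norm_eq_iSup_norm]
  exact σ.surjective.iSup_comp fun x ↦ ‖f x‖

noncomputable def compHomeomorph (σ : Y ≃ₜ X) : C₀(X, E) ≃ₗᵢ[𝕜] C₀(Y, E) :=
  LinearIsometryEquiv.ofSurjective
    { compLinearMap σ.toCocompactMap with norm_map' := norm_comp_homeomorph σ }
    fun g ↦ ⟨g.comp σ.symm.toCocompactMap, ext fun y ↦ congrArg g (σ.symm_apply_apply y)⟩

def fiberwise (e : Y → E →ₗᵢ[𝕜] F) (he : ∀ v, Continuous fun y ↦ e y v) (f : C₀(Y, E)) :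
    C₀(Y, F) where
  toFun y := e y (f y)
  continuous_toFun := continuous_linearIsometry_apply he f.continuous
  zero_at_infty' := by
    rw [tendsto_zero_iff_norm_tendsto_zero]
    simpa only [LinearIsometry.norm_map] using
      tendsto_zero_iff_norm_tendsto_zero.1 (zero_at_infty f)

noncomputable def fiberwiseLinearIsometryEquiv (e : Y → E ≃ₗᵢ[𝕜] F)
    (he : ∀ v, Continuous fun y ↦ e y v) : C₀(Y, E) ≃ₗᵢ[𝕜] C₀(Y, F) :=
  LinearIsometryEquiv.ofSurjective
    { toFun := fiberwise (fun y ↦ (e y).toLinearIsometry) he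
      map_add' := fun f g ↦ ext fun y ↦ map_add (e y) (f y) (g y)
      map_smul' := fun c f ↦ ext fun y ↦ map_smul (e y) c (f y)
      norm_map' := fun f ↦ norm_eq_of_forall_norm_apply_eq fun y ↦ (e y).norm_map (f y) }
    fun g ↦ ⟨fiberwise (fun y ↦ (e y).symm.toLinearIsometry)
        (continuous_linearIsometryEquiv_symm_apply he) g,
      ext fun y ↦ (e y).apply_symm_apply (g y)⟩

end ZeroAtInftyContinuousMap

theorem weighted_composition_operator_isometry_general
    {X Y : Type*} [TopologicalSpace X]
    [TopologicalSpace Y]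
    {H₁ H₂ : Type*} [NormedAddCommGroup H₁] [InnerProductSpace ℂ H₁]
    [NormedAddCommGroup H₂] [InnerProductSpace ℂ H₂]
    (σ : Y ≃ₜ X) (h : Y → (H₁ →L[ℂ] H₂))
    (hunitary_iso : ∀ (y : Y) (v : H₁), ‖h y v‖ = ‖v‖)
    (hunitary_surj : ∀ y : Y, Function.Surjective (h y))
    (hSOT : ∀ v : H₁, Continuous fun y => h y v) :
    ∃ T : C₀(X, H₁) →ₗ[ℂ] C₀(Y, H₂),
      (∀ (f : C₀(X, H₁)) (y : Y), T f y = h y (f (σ y))) ∧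
      (∀ f : C₀(X, H₁), ‖T f‖ = ‖f‖) ∧
      Function.Surjective T ∧
      (∀ (f g : C₀(X, H₁)) (y : Y),
        (inner ℂ (T f y) (T g y) : ℂ) = inner ℂ (f (σ y)) (g (σ y))) := by
  let e : Y → H₁ ≃ₗᵢ[ℂ] H₂ := fun y ↦
    LinearIsometryEquiv.ofSurjective ⟨(h y).toLinearMap, hunitary_iso y⟩ (hunitary_surj y)
  let T : C₀(X, H₁) ≃ₗᵢ[ℂ] C₀(Y, H₂) :=
    (ZeroAtInftyContinuousMap.compHomeomorph σ).trans
      (ZeroAtInftyContinuousMap.fiberwiseLinearIsometryEquiv e hSOT)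
  exact ⟨T.toLinearEquiv.toLinearMap, fun _ _ ↦ rfl, T.norm_map, T.surjective,
    fun f g y ↦ (e y).inner_map_map (f (σ y)) (g (σ y))⟩

/-- The weighted composition operator `(Tf)(y) = h(y)(f(σ(y)))`, where `σ` is a homeomorphism
and `h` is an SOT-continuous family of unitaries, is a well-defined surjective linear isometry
`C₀(X, H₁) → C₀(Y, H₂)` with `⟨Tf, Tg⟩ = ⟨f, g⟩ ∘ σ`. -/
theorem weighted_composition_operator_isometry
    {X Y : Type*} [TopologicalSpace X] [LocallyCompactSpace X] [T2Space X]
    [TopologicalSpace Y] [LocallyCompactSpace Y] [T2Space Y]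
    {H₁ H₂ : Type*} [NormedAddCommGroup H₁] [InnerProductSpace ℂ H₁]
    [NormedAddCommGroup H₂] [InnerProductSpace ℂ H₂]
    (σ : Y ≃ₜ X) (h : Y → (H₁ →L[ℂ] H₂))
    (hunitary_iso : ∀ (y : Y) (v : H₁), ‖h y v‖ = ‖v‖)
    (hunitary_surj : ∀ y : Y, Function.Surjective (h y))
    (hSOT : ∀ v : H₁, Continuous fun y => h y v) :
    ∃ T : C₀(X, H₁) →ₗ[ℂ] C₀(Y, H₂),
      (∀ (f : C₀(X, H₁)) (y : Y), T f y = h y (f (σ y))) ∧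
      (∀ f : C₀(X, H₁), ‖T f‖ = ‖f‖) ∧
      Function.Surjective T ∧
      (∀ (f g : C₀(X, H₁)) (y : Y),
        (inner ℂ (T f y) (T g y) : ℂ) = inner ℂ (f (σ y)) (g (σ y))) :=
  weighted_composition_operator_isometry_general σ h hunitary_iso hunitary_surj hSOT
end

section
/- Let T : E → F be a bijective linear map between Hilbert C*-modules over A and B. Suppose T is a triple homomorphism, i.e., T(z⟨x,y⟩) = Tz⟨Tx,Ty⟩ for all x, y, z ∈ E. Then for x_i, y_i ∈ E and scalars α_i (i = 1,…,n), Σᵢ αᵢ⟨xᵢ, yᵢ⟩ acts as zero on E (i.e., z·Σᵢ αᵢ⟨xᵢ,yᵢ⟩ = 0 for all z ∈ E) if and only if Σᵢ αᵢ⟨Txᵢ, Tyᵢ⟩ acts as zero on F. -/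
open scoped RightActions ComplexOrder

/-! A triple homomorphism `T` intertwines right multiplication by `a = Σ αᵢ⟨xᵢ, yᵢ⟩` on `E` with
right multiplication by `b = Σ αᵢ⟨Txᵢ, Tyᵢ⟩` on `F`, since `z ↦ z <• a` is linear in `a`; a
bijection fixing `0` then identifies the annihilation conditions `E <• a = 0` and `F <• b = 0`. -/

namespace RightCStarModule

variable {A E : Type*} [NonUnitalCStarAlgebra A] [PartialOrder A]
  [AddCommGroup E] [Module ℂ E] [SMul Aᵐᵒᵖ E] [Norm E] [RightCStarModule A E]

variable (A) in
def innerAddHomRight (x : E) : E →+ A :=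
  AddMonoidHom.mk' (fun w => inner A x w) fun _ _ => inner_add_right

lemma inner_sub_right (x y z : E) : (inner A x (y - z) : A) = inner A x y - inner A x z :=
  map_sub (innerAddHomRight A x) y z

lemma ext_inner_left {u u' : E} (h : ∀ v : E, (inner A v u : A) = inner A v u') : u = u' := by
  have h0 : (inner A (u - u') (u - u') : A) = 0 := by
    rw [inner_sub_right, h, sub_self]
  exact sub_eq_zero.mp (inner_self.mp h0)

/- The class assumes nothing about how `<•` interacts with the algebra structure of `A`;
linearity in the scalar is recovered from nondegeneracy of the inner product. -/
lemma op_smul_add (z : E) (a b : A) : z <• (a + b) = z <• a + z <• b :=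
  ext_inner_left (A := A) fun v => by
    rw [inner_op_smul_right, inner_add_right, inner_op_smul_right, inner_op_smul_right, mul_add]

lemma op_smul_complex_smul (z : E) (c : ℂ) (a : A) : z <• (c • a) = c • (z <• a) :=
  ext_inner_left (A := A) fun v => by
    rw [inner_op_smul_right, inner_smul_right_complex, inner_op_smul_right, mul_smul_comm]

variable (A) in
def opSMulLinear (z : E) : A →ₗ[ℂ] E where
  toFun a := z <• a
  map_add' := op_smul_add z
  map_smul' := op_smul_complex_smul z

end RightCStarModule

open RightCStarModule

lemma forall_op_smul_eq_zero_iff_of_bijective {R S M N : Type*} [Zero M] [Zero N]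
    [SMul Rᵐᵒᵖ M] [SMul Sᵐᵒᵖ N] {f : M → N} (hf : Function.Bijective f) (hf0 : f 0 = 0)
    {a : R} {b : S} (h : ∀ z, f (z <• a) = f z <• b) :
    (∀ z : M, z <• a = 0) ↔ (∀ w : N, w <• b = 0) := by
  constructor
  · intro ha w
    obtain ⟨z, rfl⟩ := hf.2 w
    rw [← h, ha, hf0]
  · intro hb z
    apply hf.1
    rw [h, hb, hf0]

lemma LinearMap.map_op_smul_sum_inner_of_triple {A B E F : Type*}
    [NonUnitalCStarAlgebra A] [PartialOrder A] [NonUnitalCStarAlgebra B] [PartialOrder B]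
    [AddCommGroup E] [Module ℂ E] [SMul Aᵐᵒᵖ E] [Norm E] [RightCStarModule A E]
    [AddCommGroup F] [Module ℂ F] [SMul Bᵐᵒᵖ F] [Norm F] [RightCStarModule B F]
    (T : E →ₗ[ℂ] F)
    (htriple : ∀ x y z : E, T (z <• (inner A x y : A)) = T z <• (inner B (T x) (T y) : B))
    {ι : Type*} (s : Finset ι) (x y : ι → E) (α : ι → ℂ) (z : E) :
    T (z <• ∑ i ∈ s, α i • (inner A (x i) (y i) : A))
      = T z <• ∑ i ∈ s, α i • (inner B (T (x i)) (T (y i)) : B) := by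
  change T (opSMulLinear A z _) = opSMulLinear B (T z) _
  simp only [map_sum, map_smul]
  exact Finset.sum_congr rfl fun i _ => congrArg (α i • ·) (htriple (x i) (y i) z)

theorem triple_hom_kernel_correspondence_general
    {A B E F : Type*}
    [NonUnitalCStarAlgebra A] [PartialOrder A]
    [NonUnitalCStarAlgebra B] [PartialOrder B]
    [AddCommGroup E] [Module ℂ E] [SMul Aᵐᵒᵖ E] [Norm E] [RightCStarModule A E]
    [AddCommGroup F] [Module ℂ F] [SMul Bᵐᵒᵖ F] [Norm F] [RightCStarModule B F]
    (T : E →ₗ[ℂ] F) (hbij : Function.Bijective T)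
    (htriple : ∀ x y z : E, T (z <• (inner A x y : A)) = T z <• (inner B (T x) (T y) : B))
    (n : ℕ) (x y : Fin n → E) (α : Fin n → ℂ) :
    (∀ z : E, z <• (∑ i, α i • (inner A (x i) (y i) : A)) = 0) ↔
    (∀ w : F, w <• (∑ i, α i • (inner B (T (x i)) (T (y i)) : B)) = 0) :=
  forall_op_smul_eq_zero_iff_of_bijective hbij T.map_zero
    (T.map_op_smul_sum_inner_of_triple htriple Finset.univ x y α)

/-- If `T` is a bijective linear triple homomorphism between Hilbert C*-modules, then a finite
combination `Σᵢ αᵢ⟨xᵢ, yᵢ⟩` acts as zero on `E` if and only if `Σᵢ αᵢ⟨Txᵢ, Tyᵢ⟩` acts as zero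
on `F`. -/
theorem triple_hom_kernel_correspondence
    {A B E F : Type*}
    [NonUnitalCStarAlgebra A] [PartialOrder A] [StarOrderedRing A]
    [NonUnitalCStarAlgebra B] [PartialOrder B] [StarOrderedRing B]
    [AddCommGroup E] [Module ℂ E] [SMul Aᵐᵒᵖ E] [Norm E] [RightCStarModule A E]
    [AddCommGroup F] [Module ℂ F] [SMul Bᵐᵒᵖ F] [Norm F] [RightCStarModule B F]
    (T : E →ₗ[ℂ] F) (hbij : Function.Bijective T)
    (htriple : ∀ x y z : E, T (z <• (inner A x y : A)) = T z <• (inner B (T x) (T y) : B))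
    (n : ℕ) (x y : Fin n → E) (α : Fin n → ℂ) :
    (∀ z : E, z <• (∑ i, α i • (inner A (x i) (y i) : A)) = 0) ↔
    (∀ w : F, w <• (∑ i, α i • (inner B (T (x i)) (T (y i)) : B)) = 0) :=
  triple_hom_kernel_correspondence_general T hbij htriple n x y α
end

section
/- Let E, F be Hilbert C*-modules over A, B and let T : E → F be a bijective linear triple homomorphism (T(z⟨x,y⟩) = Tz⟨Tx,Ty⟩ for all x,y,z). Then the map φ on the linear span ⟨E,E⟩ defined by φ(Σᵢ αᵢ⟨xᵢ,yᵢ⟩) = Σᵢ αᵢ⟨Txᵢ,Tyᵢ⟩ is a well-defined injective *-homomorphism from span⟨E,E⟩ onto span⟨F,F⟩, T preserves inner products with respect to φ, and T(xa) = T(x)φ(a) for all x ∈ E and a ∈ span⟨E,E⟩. -/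
/-!
Right multiplication of `F` by elements of `span⟨F,F⟩` is faithful: if `w • b = 0` for all `w`,
then `⟨u,v⟩ b = 0` for all `u, v`, hence `b* b = 0`. As `T` is surjective, the pairs `(a, b)` with
`b ∈ span⟨F,F⟩` and `T(z a) = T(z) b` for all `z` therefore form the graph of a linear map, and
the triple identity puts `(⟨x,y⟩, ⟨Tx,Ty⟩)` in it, so its domain contains `span⟨E,E⟩`; `φ` is this
map. Multiplicativity and injectivity are read off the graph, and `φ` commutes with `star`
on generators because `star ⟨x,y⟩ = ⟨y,x⟩`.
-/

open scoped RightActions ComplexOrder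

/-- The Hilbert C⋆-module class as it stood in Mathlib (Dec 2024): a right `A`-module structure
given by `SMul Aᵐᵒᵖ E`, with inner product `A`-linear in the second argument on the right. -/
class CStarModule' (A E : Type*) [NonUnitalSemiring A] [StarRing A] [Module ℂ A]
    [AddCommGroup E] [Module ℂ E] [PartialOrder A] [SMul Aᵐᵒᵖ E] [Norm A] [Norm E]
    extends Inner A E where
  inner_add_right {x} {y} {z} : inner x (y + z) = inner x y + inner x z
  inner_self_nonneg {x} : 0 ≤ inner x x
  inner_self {x} : inner x x = 0 ↔ x = 0
  inner_op_smul_right {a : A} {x y : E} : inner x (y <• a) = inner x y * a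
  inner_smul_right_complex {z : ℂ} {x} {y} : inner x (z • y) = z • inner x y
  star_inner x y : star (inner x y) = inner y x
  norm_eq_sqrt_norm_inner_self x : ‖x‖ = √‖inner x x‖

open Submodule

namespace CStarModule'

variable {A E : Type*} [NonUnitalCStarAlgebra A] [PartialOrder A]
  [AddCommGroup E] [Module ℂ E] [SMul Aᵐᵒᵖ E] [Norm E] [CStarModule' A E]

variable (A) in
def innerRightₗ (x : E) : E →ₗ[ℂ] A where
  toFun := inner A x
  map_add' _ _ := inner_add_right
  map_smul' _ _ := inner_smul_right_complex

lemma inner_zero_right (x : E) : inner A x (0 : E) = 0 :=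
  map_zero (innerRightₗ A x)

lemma inner_sub_right (x y z : E) : inner A x (y - z) = inner A x y - inner A x z :=
  map_sub (innerRightₗ A x) y z

lemma ext_inner {u v : E} (h : ∀ w : E, inner A w u = inner A w v) : u = v := by
  rw [← sub_eq_zero, ← inner_self (A := A), inner_sub_right, h, sub_self]

variable (A) in
def opSMulₗ (z : E) : A →ₗ[ℂ] E where
  toFun a := z <• a
  map_add' a b := ext_inner (A := A) fun w => by
    simp only [inner_op_smul_right, inner_add_right, mul_add]
  map_smul' α a := ext_inner (A := A) fun w => by
    simp only [inner_op_smul_right, inner_smul_right_complex, RingHom.id_apply, mul_smul_comm]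

lemma op_smul_add (z : E) (a b : A) : z <• (a + b) = z <• a + z <• b := map_add (opSMulₗ A z) a b

lemma op_smul_complex_smul (z : E) (α : ℂ) (a : A) : z <• (α • a) = α • (z <• a) :=
  map_smul (opSMulₗ A z) α a

lemma op_smul_zero (z : E) : z <• (0 : A) = 0 := map_zero (opSMulₗ A z)

lemma op_smul_sub (z : E) (a b : A) : z <• (a - b) = z <• a - z <• b := map_sub (opSMulₗ A z) a b

lemma op_smul_mul (z : E) (a b : A) : z <• (a * b) = z <• a <• b :=
  ext_inner (A := A) fun w => by simp only [inner_op_smul_right, mul_assoc]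

end CStarModule'

open CStarModule'

section InnerSpan

variable (A E : Type*) [NonUnitalCStarAlgebra A] [PartialOrder A]
  [AddCommGroup E] [Module ℂ E] [SMul Aᵐᵒᵖ E] [Norm E] [CStarModule' A E]

def innerSpan : Submodule ℂ A := span ℂ {a : A | ∃ x y : E, inner A x y = a}

variable {A E}

lemma inner_mem_innerSpan (x y : E) : inner A x y ∈ innerSpan A E := subset_span ⟨x, y, rfl⟩

lemma star_mem_innerSpan {a : A} (ha : a ∈ innerSpan A E) : star a ∈ innerSpan A E := by
  induction ha using span_induction with
  | mem a h =>
    obtain ⟨x, y, rfl⟩ := h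
    rw [star_inner]
    exact inner_mem_innerSpan y x
  | zero => simp
  | add a b _ _ ha hb => simpa using add_mem ha hb
  | smul α a _ ha => simpa using smul_mem _ (star α) ha

lemma mul_mem_innerSpan {a : A} (ha : a ∈ innerSpan A E) (c : A) : a * c ∈ innerSpan A E := by
  induction ha using span_induction with
  | mem a h =>
    obtain ⟨x, y, rfl⟩ := h
    rw [← inner_op_smul_right]
    exact inner_mem_innerSpan x (y <• c)
  | zero => simp
  | add a b _ _ ha hb => simpa [add_mul] using add_mem ha hb
  | smul α a _ ha => rw [smul_mul_assoc]; exact smul_mem _ α ha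

lemma eq_of_forall_op_smul_eq {a b : A} (ha : a ∈ innerSpan A E) (hb : b ∈ innerSpan A E)
    (h : ∀ z : E, z <• a = z <• b) : a = b := by
  have hmul : ∀ c ∈ innerSpan A E, c * (a - b) = 0 := by
    intro c hc
    induction hc using span_induction with
    | mem c hc =>
      obtain ⟨x, y, rfl⟩ := hc
      rw [← inner_op_smul_right, op_smul_sub, h, sub_self, CStarModule'.inner_zero_right]
    | zero => simp
    | add c d _ _ hc hd => rw [add_mul, hc, hd, add_zero]
    | smul α c _ hc => rw [smul_mul_assoc, hc, smul_zero]
  exact sub_eq_zero.mp <| CStarRing.star_mul_self_eq_zero_iff _ |>.mp <|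
    hmul _ (star_mem_innerSpan (sub_mem ha hb))

end InnerSpan

section TripleHom

variable {A B E F : Type*}
  [NonUnitalCStarAlgebra A] [PartialOrder A] [NonUnitalCStarAlgebra B] [PartialOrder B]
  [AddCommGroup E] [Module ℂ E] [SMul Aᵐᵒᵖ E] [Norm E] [CStarModule' A E]
  [AddCommGroup F] [Module ℂ F] [SMul Bᵐᵒᵖ F] [Norm F] [CStarModule' B F]

variable (A B) in
def intertwiningGraph (T : E →ₗ[ℂ] F) : Submodule ℂ (A × B) where
  carrier := {p | p.2 ∈ innerSpan B F ∧ ∀ z : E, T (z <• p.1) = T z <• p.2}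
  add_mem' := by
    rintro ⟨a, b⟩ ⟨a', b'⟩ ⟨hb, h⟩ ⟨hb', h'⟩
    refine ⟨add_mem hb hb', fun z => ?_⟩
    simp only [Prod.mk_add_mk, op_smul_add, map_add, h, h']
  zero_mem' := ⟨zero_mem _, fun z => by
    simp only [Prod.fst_zero, Prod.snd_zero, op_smul_zero, map_zero]⟩
  smul_mem' := by
    rintro α ⟨a, b⟩ ⟨hb, h⟩
    refine ⟨smul_mem _ α hb, fun z => ?_⟩
    simp only [Prod.smul_mk, op_smul_complex_smul, map_smul, h]

variable {T : E →ₗ[ℂ] F}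

lemma mem_intertwiningGraph {a : A} {b : B} :
    (a, b) ∈ intertwiningGraph A B T ↔ b ∈ innerSpan B F ∧ ∀ z : E, T (z <• a) = T z <• b :=
  Iff.rfl

lemma inner_mem_intertwiningGraph
    (htriple : ∀ x y z : E, T (z <• inner A x y) = T z <• inner B (T x) (T y)) (x y : E) :
    (inner A x y, inner B (T x) (T y)) ∈ intertwiningGraph A B T :=
  ⟨inner_mem_innerSpan _ _, htriple x y⟩

lemma innerSpan_le_map_fst_intertwiningGraph
    (htriple : ∀ x y z : E, T (z <• inner A x y) = T z <• inner B (T x) (T y)) :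
    innerSpan A E ≤ (intertwiningGraph A B T).map (LinearMap.fst ℂ A B) :=
  span_le.mpr <| by
    rintro _ ⟨x, y, rfl⟩
    exact ⟨_, inner_mem_intertwiningGraph htriple x y, rfl⟩

lemma snd_eq_zero_of_mem_intertwiningGraph (hT : Function.Surjective T) :
    ∀ p ∈ intertwiningGraph A B T, p.1 = 0 → p.2 = 0 := by
  rintro ⟨a, b⟩ ⟨hb, h⟩ (rfl : a = 0)
  refine eq_of_forall_op_smul_eq hb (zero_mem _) fun w => ?_
  obtain ⟨z, rfl⟩ := hT w
  rw [← h, op_smul_zero, op_smul_zero, map_zero]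

noncomputable def inducedHom
    (htriple : ∀ x y z : E, T (z <• inner A x y) = T z <• inner B (T x) (T y)) :
    innerSpan A E →ₗ[ℂ] B :=
  (intertwiningGraph A B T).toLinearPMap.toFun ∘ₗ
    inclusion (innerSpan_le_map_fst_intertwiningGraph htriple)

variable (htriple : ∀ x y z : E, T (z <• inner A x y) = T z <• inner B (T x) (T y))
  (hT : Function.Surjective T)

include hT in
lemma mem_intertwiningGraph_inducedHom (a : innerSpan A E) :
    ((a : A), inducedHom htriple a) ∈ intertwiningGraph A B T :=
  mem_graph_toLinearPMap (snd_eq_zero_of_mem_intertwiningGraph hT) _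

include hT in
lemma inducedHom_eq_of_mem {a : innerSpan A E} {b : B}
    (h : ((a : A), b) ∈ intertwiningGraph A B T) : inducedHom htriple a = b :=
  (existsUnique_from_graph (snd_eq_zero_of_mem_intertwiningGraph hT _)
    (innerSpan_le_map_fst_intertwiningGraph htriple a.2)).unique
    (mem_intertwiningGraph_inducedHom htriple hT a) h

include hT in
lemma inducedHom_inner (x y : E) :
    inducedHom htriple ⟨inner A x y, inner_mem_innerSpan x y⟩ = inner B (T x) (T y) :=
  inducedHom_eq_of_mem htriple hT (inner_mem_intertwiningGraph htriple x y)

include hT in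
lemma inducedHom_mem_innerSpan (a : innerSpan A E) : inducedHom htriple a ∈ innerSpan B F :=
  (mem_intertwiningGraph_inducedHom htriple hT a).1

include hT in
lemma map_op_smul_eq_op_smul_inducedHom (z : E) (a : innerSpan A E) :
    T (z <• (a : A)) = T z <• inducedHom htriple a :=
  (mem_intertwiningGraph_inducedHom htriple hT a).2 z

include hT in
lemma inducedHom_mul (a b : A) (ha : a ∈ innerSpan A E) (hb : b ∈ innerSpan A E)
    (hab : a * b ∈ innerSpan A E) :
    inducedHom htriple ⟨a * b, hab⟩ = inducedHom htriple ⟨a, ha⟩ * inducedHom htriple ⟨b, hb⟩ := by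
  refine inducedHom_eq_of_mem htriple hT <| mem_intertwiningGraph.2
    ⟨mul_mem_innerSpan (inducedHom_mem_innerSpan htriple hT _) _, fun z => ?_⟩
  rw [CStarModule'.op_smul_mul, CStarModule'.op_smul_mul,
    map_op_smul_eq_op_smul_inducedHom htriple hT _ ⟨b, hb⟩,
    map_op_smul_eq_op_smul_inducedHom htriple hT z ⟨a, ha⟩]

include hT in
lemma inducedHom_star (a : A) (ha : a ∈ innerSpan A E) (hsa : star a ∈ innerSpan A E) :
    inducedHom htriple ⟨star a, hsa⟩ = star (inducedHom htriple ⟨a, ha⟩) := by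
  induction ha using span_induction with
  | mem a h =>
    obtain ⟨x, y, rfl⟩ := h
    simp only [star_inner, inducedHom_inner htriple hT]
  | zero =>
    simp only [star_zero]
    show inducedHom htriple 0 = star (inducedHom htriple 0)
    rw [map_zero, star_zero]
  | add a b ha hb iha ihb =>
    simp only [star_add]
    show inducedHom htriple (⟨star a, star_mem_innerSpan ha⟩ + ⟨star b, star_mem_innerSpan hb⟩) =
      star (inducedHom htriple (⟨a, ha⟩ + ⟨b, hb⟩))
    rw [map_add, map_add, iha, ihb, star_add]
  | smul α a ha iha =>
    simp only [star_smul]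
    show inducedHom htriple (star α • ⟨star a, star_mem_innerSpan ha⟩) =
      star (inducedHom htriple (α • ⟨a, ha⟩))
    rw [map_smul, map_smul, iha, star_smul]

include hT in
lemma inducedHom_injective (hT_inj : Function.Injective T) :
    Function.Injective (inducedHom htriple) := by
  intro a b hab
  refine Subtype.ext <| eq_of_forall_op_smul_eq a.2 b.2 fun z => hT_inj ?_
  rw [map_op_smul_eq_op_smul_inducedHom htriple hT, map_op_smul_eq_op_smul_inducedHom htriple hT,
    hab]

include hT in
lemma range_inducedHom : LinearMap.range (inducedHom htriple) = innerSpan B F := by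
  refine le_antisymm ?_ (span_le.mpr ?_)
  · rintro _ ⟨a, rfl⟩
    exact inducedHom_mem_innerSpan htriple hT a
  · rintro _ ⟨u, v, rfl⟩
    obtain ⟨x, rfl⟩ := hT u
    obtain ⟨y, rfl⟩ := hT v
    exact ⟨_, inducedHom_inner htriple hT x y⟩

end TripleHom

theorem triple_hom_induces_star_hom_general
    {A B E F : Type*}
    [NonUnitalCStarAlgebra A] [PartialOrder A]
    [NonUnitalCStarAlgebra B] [PartialOrder B]
    [AddCommGroup E] [Module ℂ E] [SMul Aᵐᵒᵖ E] [Norm E] [CStarModule' A E]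
    [AddCommGroup F] [Module ℂ F] [SMul Bᵐᵒᵖ F] [Norm F] [CStarModule' B F]
    (T : E →ₗ[ℂ] F) (hbij : Function.Bijective T)
    (htriple : ∀ x y z : E, T (z <• (inner A x y : A)) = T z <• (inner B (T x) (T y) : B)) :
    ∃ φ : (Submodule.span ℂ {a : A | ∃ x y : E, (inner A x y : A) = a}) →ₗ[ℂ] B,
      Function.Injective φ ∧
      -- the image of `φ` is `span⟨F,F⟩`
      LinearMap.range φ = Submodule.span ℂ {b : B | ∃ u v : F, (inner B u v : B) = b} ∧
      -- `φ` is well defined by `φ(Σ αᵢ⟨xᵢ,yᵢ⟩) = Σ αᵢ⟨Txᵢ,Tyᵢ⟩`, i.e. `T` preserves the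
      -- inner products with respect to `φ`
      (∀ x y : E,
        φ ⟨(inner A x y : A), Submodule.subset_span ⟨x, y, rfl⟩⟩ = (inner B (T x) (T y) : B)) ∧
      -- `φ` is multiplicative
      (∀ (a b : A) (ha : a ∈ Submodule.span ℂ {a : A | ∃ x y : E, (inner A x y : A) = a})
          (hb : b ∈ Submodule.span ℂ {a : A | ∃ x y : E, (inner A x y : A) = a})
          (hab : a * b ∈ Submodule.span ℂ {a : A | ∃ x y : E, (inner A x y : A) = a}),
        φ ⟨a * b, hab⟩ = φ ⟨a, ha⟩ * φ ⟨b, hb⟩) ∧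
      -- `φ` is star-preserving
      (∀ (a : A) (ha : a ∈ Submodule.span ℂ {a : A | ∃ x y : E, (inner A x y : A) = a})
          (hsa : star a ∈ Submodule.span ℂ {a : A | ∃ x y : E, (inner A x y : A) = a}),
        φ ⟨star a, hsa⟩ = star (φ ⟨a, ha⟩)) ∧
      -- `T` is a module map with respect to `φ`
      (∀ (x : E) (a : A)
          (ha : a ∈ Submodule.span ℂ {a : A | ∃ x y : E, (inner A x y : A) = a}),
        T (x <• a) = T x <• φ ⟨a, ha⟩) :=
  ⟨inducedHom htriple, inducedHom_injective htriple hbij.2 hbij.1, range_inducedHom htriple hbij.2,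
    inducedHom_inner htriple hbij.2, inducedHom_mul htriple hbij.2, inducedHom_star htriple hbij.2,
    fun x a ha => map_op_smul_eq_op_smul_inducedHom htriple hbij.2 x ⟨a, ha⟩⟩

/-- A bijective linear triple homomorphism `T` between Hilbert C*-modules induces a well-defined
injective *-homomorphism `φ` from `span⟨E,E⟩` onto `span⟨F,F⟩` with `φ⟨x,y⟩ = ⟨Tx,Ty⟩`; `T`
preserves the inner products with respect to `φ` and `T(xa) = T(x)φ(a)` for `a ∈ span⟨E,E⟩`. -/
theorem triple_hom_induces_star_hom
    {A B E F : Type*}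
    [NonUnitalCStarAlgebra A] [PartialOrder A] [StarOrderedRing A]
    [NonUnitalCStarAlgebra B] [PartialOrder B] [StarOrderedRing B]
    [AddCommGroup E] [Module ℂ E] [SMul Aᵐᵒᵖ E] [Norm E] [CStarModule' A E]
    [AddCommGroup F] [Module ℂ F] [SMul Bᵐᵒᵖ F] [Norm F] [CStarModule' B F]
    (T : E →ₗ[ℂ] F) (hbij : Function.Bijective T)
    (htriple : ∀ x y z : E, T (z <• (inner A x y : A)) = T z <• (inner B (T x) (T y) : B)) :
    ∃ φ : (Submodule.span ℂ {a : A | ∃ x y : E, (inner A x y : A) = a}) →ₗ[ℂ] B,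
      Function.Injective φ ∧
      -- the image of `φ` is `span⟨F,F⟩`
      LinearMap.range φ = Submodule.span ℂ {b : B | ∃ u v : F, (inner B u v : B) = b} ∧
      -- `φ` is well defined by `φ(Σ αᵢ⟨xᵢ,yᵢ⟩) = Σ αᵢ⟨Txᵢ,Tyᵢ⟩`, i.e. `T` preserves the
      -- inner products with respect to `φ`
      (∀ x y : E,
        φ ⟨(inner A x y : A), Submodule.subset_span ⟨x, y, rfl⟩⟩ = (inner B (T x) (T y) : B)) ∧
      -- `φ` is multiplicative
      (∀ (a b : A) (ha : a ∈ Submodule.span ℂ {a : A | ∃ x y : E, (inner A x y : A) = a})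
          (hb : b ∈ Submodule.span ℂ {a : A | ∃ x y : E, (inner A x y : A) = a})
          (hab : a * b ∈ Submodule.span ℂ {a : A | ∃ x y : E, (inner A x y : A) = a}),
        φ ⟨a * b, hab⟩ = φ ⟨a, ha⟩ * φ ⟨b, hb⟩) ∧
      -- `φ` is star-preserving
      (∀ (a : A) (ha : a ∈ Submodule.span ℂ {a : A | ∃ x y : E, (inner A x y : A) = a})
          (hsa : star a ∈ Submodule.span ℂ {a : A | ∃ x y : E, (inner A x y : A) = a}),
        φ ⟨star a, hsa⟩ = star (φ ⟨a, ha⟩)) ∧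
      -- `T` is a module map with respect to `φ`
      (∀ (x : E) (a : A)
          (ha : a ∈ Submodule.span ℂ {a : A | ∃ x y : E, (inner A x y : A) = a}),
        T (x <• a) = T x <• φ ⟨a, ha⟩) :=
  triple_hom_induces_star_hom_general T hbij htriple
end
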